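/- Let u ∈ C_0^{m+1}(ℝ^d, ℝ^d) and φ, ψ be C^m diffeomorphisms with ‖φ − id‖_{m,∞} ≤ r and ‖ψ − id‖_{m,∞} ≤ r. Then ‖u ∘ φ − u ∘ ψ‖_{m,∞} ≤ C_r ‖u‖_{m+1,∞} ‖φ − ψ‖_{m,∞} for a constant C_r depending only on r, m, d. -/

import Mathlib

/-!
Induction on `m`, for maps `u` into an arbitrary normed space. For `m = 0` this is the mean value
inequality. In the induction step,
`D(u ∘ φ - u ∘ ψ) = (Du ∘ φ - Du ∘ ψ) ∘ Dφ + (Du ∘ ψ) ∘ (Dφ - Dψ)`, and the Leibniz rule reduces the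
`m`-th derivative of each term to lower derivatives of its factors: those of `Du ∘ φ - Du ∘ ψ` are
controlled by the induction hypothesis applied to `Du`, those of `Du ∘ ψ` by Faà di Bruno's formula,
and `‖φ - id‖_{m,∞} ≤ r` bounds every derivative of `φ` of positive order by `r + 1`. Decay of the
derivatives of `u` at infinity makes the suprema in `‖u‖_{m+1,∞}` finite.
-/

noncomputable section

/-- The `C^k`-sup norm `‖f‖_{k,∞} = Σ_{j≤k} sup_x ‖D^j f(x)‖`. -/
def cSupNorm {d : ℕ} (k : ℕ)
    (f : EuclideanSpace ℝ (Fin d) → EuclideanSpace ℝ (Fin d)) : ℝ :=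
  ∑ j ∈ Finset.range (k + 1), ⨆ x, ‖iteratedFDeriv ℝ j f x‖

open Filter Finset

section Bounds

variable {D E F G : Type*} [NormedAddCommGroup D] [NormedSpace ℝ D]
  [NormedAddCommGroup E] [NormedSpace ℝ E] [NormedAddCommGroup F] [NormedSpace ℝ F]
  [NormedAddCommGroup G] [NormedSpace ℝ G]

theorem ContinuousLinearMap.norm_iteratedFDeriv_le_of_bilinear_of_forall_le
    (B : E →L[ℝ] F →L[ℝ] G) {f : D → E} {g : D → F} {n : ℕ} (hf : ContDiff ℝ n f)
    (hg : ContDiff ℝ n g) (x : D) (hB : ‖B‖ ≤ 1) {a b : ℝ}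
    (hfa : ∀ i ≤ n, ‖iteratedFDeriv ℝ i f x‖ ≤ a) (hgb : ∀ i ≤ n, ‖iteratedFDeriv ℝ i g x‖ ≤ b) :
    ‖iteratedFDeriv ℝ n (fun y => B (f y) (g y)) x‖ ≤ 2 ^ n * a * b := by
  have ha : 0 ≤ a := (norm_nonneg _).trans (hfa 0 n.zero_le)
  calc ‖iteratedFDeriv ℝ n (fun y => B (f y) (g y)) x‖
      ≤ ∑ i ∈ range (n + 1), (n.choose i : ℝ) * ‖iteratedFDeriv ℝ i f x‖ *
          ‖iteratedFDeriv ℝ (n - i) g x‖ :=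
        B.norm_iteratedFDeriv_le_of_bilinear_of_le_one hf hg x le_rfl hB
    _ ≤ ∑ i ∈ range (n + 1), (n.choose i : ℝ) * a * b := by
        gcongr with i hi
        · exact hfa i (Nat.lt_succ_iff.mp (mem_range.mp hi))
        · exact hgb (n - i) (n.sub_le i)
    _ = 2 ^ n * a * b := by
        rw [← sum_mul, ← sum_mul]
        exact_mod_cast by rw [Nat.sum_range_choose]

theorem norm_iteratedFDeriv_comp_clm_le {f : D → E →L[ℝ] F} {g : D → G →L[ℝ] E} {n : ℕ}
    (hf : ContDiff ℝ n f) (hg : ContDiff ℝ n g) (x : D) {a b : ℝ}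
    (hfa : ∀ i ≤ n, ‖iteratedFDeriv ℝ i f x‖ ≤ a) (hgb : ∀ i ≤ n, ‖iteratedFDeriv ℝ i g x‖ ≤ b) :
    ‖iteratedFDeriv ℝ n (fun y => (f y).comp (g y)) x‖ ≤ 2 ^ n * a * b :=
  (ContinuousLinearMap.compL ℝ G E F).norm_iteratedFDeriv_le_of_bilinear_of_forall_le hf hg x
    (ContinuousLinearMap.norm_compL_le ℝ G E F) hfa hgb

theorem norm_iteratedFDeriv_comp_le_of_forall_le {g : E → F} {f : D → E} {n : ℕ} {M R : ℝ}
    (hg : ContDiff ℝ n g) (hf : ContDiff ℝ n f) (hR : 1 ≤ R)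
    (hgM : ∀ i ≤ n, ∀ y, ‖iteratedFDeriv ℝ i g y‖ ≤ M)
    (hfR : ∀ i, 1 ≤ i → i ≤ n → ∀ x, ‖iteratedFDeriv ℝ i f x‖ ≤ R) :
    ∀ i ≤ n, ∀ x, ‖iteratedFDeriv ℝ i (g ∘ f) x‖ ≤ n.factorial * M * R ^ n := by
  intro i hi x
  have hM : 0 ≤ M := (norm_nonneg _).trans (hgM 0 n.zero_le (f x))
  calc ‖iteratedFDeriv ℝ i (g ∘ f) x‖ ≤ i.factorial * M * R ^ i :=
        norm_iteratedFDeriv_comp_le hg hf (by exact_mod_cast hi) x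
          (fun k hk => hgM k (hk.trans hi) (f x))
          fun k hk hki => (hfR k hk (hki.trans hi) x).trans (le_self_pow₀ hR (by omega))
    _ ≤ n.factorial * M * R ^ n := by gcongr

theorem norm_iteratedFDeriv_succ_id_le (n : ℕ) (x : E) :
    ‖iteratedFDeriv ℝ (n + 1) (fun y : E => y) x‖ ≤ 1 := by
  rw [← norm_iteratedFDeriv_fderiv, show fderiv ℝ (fun y : E => y) = fun _ => .id ℝ E from
    funext fun _ => fderiv_fun_id]
  rcases n with _ | n
  · rw [norm_iteratedFDeriv_zero]
    exact ContinuousLinearMap.norm_id_le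
  · rw [iteratedFDeriv_const_of_ne n.succ_ne_zero]
    simp

theorem norm_iteratedFDeriv_le_of_sub_id_le {φ : E → E} {k : ℕ} {r : ℝ}
    (hφ : ContDiff ℝ k φ) (hk : 1 ≤ k) {x : E}
    (h : ‖iteratedFDeriv ℝ k (fun y => φ y - y) x‖ ≤ r) :
    ‖iteratedFDeriv ℝ k φ x‖ ≤ r + 1 := by
  obtain ⟨n, rfl⟩ := Nat.exists_eq_add_of_le' hk
  have hsplit : φ = fun y => (φ y - y) + y := by simp
  rw [hsplit, fun_iteratedFDeriv_add_apply (hφ.sub contDiff_fun_id).contDiffAt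
    contDiff_fun_id.contDiffAt]
  exact (norm_add_le _ _).trans (add_le_add h (norm_iteratedFDeriv_succ_id_le n x))

theorem norm_iteratedFDeriv_sub_le_of_sub_id_le {φ ψ : E → E} {k : ℕ} {r : ℝ}
    (hφ : ContDiff ℝ k φ) (hψ : ContDiff ℝ k ψ) {x : E}
    (hφr : ‖iteratedFDeriv ℝ k (fun y => φ y - y) x‖ ≤ r)
    (hψr : ‖iteratedFDeriv ℝ k (fun y => ψ y - y) x‖ ≤ r) :
    ‖iteratedFDeriv ℝ k (fun y => φ y - ψ y) x‖ ≤ 2 * r := by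
  have hsplit : (fun y => φ y - ψ y) = fun y => (φ y - y) - (ψ y - y) := by
    funext y; abel
  rw [hsplit, fun_iteratedFDeriv_sub_apply (hφ.sub contDiff_fun_id).contDiffAt
    (hψ.sub contDiff_fun_id).contDiffAt, two_mul]
  exact (norm_sub_le _ _).trans (add_le_add hφr hψr)

theorem fderiv_comp_sub_comp {u : E → F} {φ ψ : D → E} (hu : Differentiable ℝ u)
    (hφ : Differentiable ℝ φ) (hψ : Differentiable ℝ ψ) :
    fderiv ℝ (fun y => u (φ y) - u (ψ y)) = fun y =>
      (fderiv ℝ u (φ y) - fderiv ℝ u (ψ y)).comp (fderiv ℝ φ y) +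
        (fderiv ℝ u (ψ y)).comp (fderiv ℝ φ y - fderiv ℝ ψ y) := by
  funext y
  have huφ : DifferentiableAt ℝ (fun z => u (φ z)) y := (hu _).comp y (hφ y)
  have huψ : DifferentiableAt ℝ (fun z => u (ψ z)) y := (hu _).comp y (hψ y)
  rw [fderiv_fun_sub huφ huψ,
    fderiv_fun_comp y (hu _) (hφ y), fderiv_fun_comp y (hu _) (hψ y),
    ContinuousLinearMap.sub_comp, ContinuousLinearMap.comp_sub]
  abel

theorem norm_iteratedFDeriv_succ_comp_sub_comp_le {u : E → F} {φ ψ : D → E} {m : ℕ}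
    {R M δ A : ℝ} (hR : 1 ≤ R) (hu : ContDiff ℝ (m + 2 : ℕ) u)
    (huM : ∀ k ≤ m + 2, ∀ y, ‖iteratedFDeriv ℝ k u y‖ ≤ M)
    (hφ : ContDiff ℝ (m + 1 : ℕ) φ) (hψ : ContDiff ℝ (m + 1 : ℕ) ψ)
    (hφR : ∀ k, 1 ≤ k → k ≤ m + 1 → ∀ x, ‖iteratedFDeriv ℝ k φ x‖ ≤ R)
    (hψR : ∀ k, 1 ≤ k → k ≤ m + 1 → ∀ x, ‖iteratedFDeriv ℝ k ψ x‖ ≤ R)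
    (hδ : ∀ k ≤ m + 1, ∀ x, ‖iteratedFDeriv ℝ k (fun y => φ y - ψ y) x‖ ≤ δ) (x : D)
    (hA : ∀ i ≤ m, ‖iteratedFDeriv ℝ i (fun y => fderiv ℝ u (φ y) - fderiv ℝ u (ψ y)) x‖ ≤ A) :
    ‖iteratedFDeriv ℝ (m + 1) (fun y => u (φ y) - u (ψ y)) x‖ ≤
      2 ^ m * A * R + 2 ^ m * (m.factorial * M * R ^ m) * δ := by
  have hφd : Differentiable ℝ φ := hφ.differentiable (by simp)
  have hψd : Differentiable ℝ ψ := hψ.differentiable (by simp)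
  have hDu : ContDiff ℝ (m + 1 : ℕ) (fderiv ℝ u) := hu.fderiv_right (by norm_cast)
  have hDφ : ContDiff ℝ m (fderiv ℝ φ) := hφ.fderiv_right (by norm_cast)
  have hDuφψ : ContDiff ℝ m (fun y => fderiv ℝ u (φ y) - fderiv ℝ u (ψ y)) :=
    ((hDu.comp hφ).sub (hDu.comp hψ)).of_le (by norm_cast; omega)
  have hDuψ : ContDiff ℝ m (fun y => fderiv ℝ u (ψ y)) :=
    (hDu.comp hψ).of_le (by norm_cast; omega)
  have hDφψ : ContDiff ℝ m (fun y => fderiv ℝ φ y - fderiv ℝ ψ y) :=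
    hDφ.sub (hψ.fderiv_right (by norm_cast))
  have hfirst : ‖iteratedFDeriv ℝ m
      (fun y => (fderiv ℝ u (φ y) - fderiv ℝ u (ψ y)).comp (fderiv ℝ φ y)) x‖ ≤
        2 ^ m * A * R := by
    refine norm_iteratedFDeriv_comp_clm_le hDuφψ hDφ x (fun i hi => ?_) fun i hi => ?_
    · exact hA i hi
    · rw [norm_iteratedFDeriv_fderiv]
      exact hφR (i + 1) (by omega) (by omega) x
  have hsecond : ‖iteratedFDeriv ℝ m
      (fun y => (fderiv ℝ u (ψ y)).comp (fderiv ℝ φ y - fderiv ℝ ψ y)) x‖ ≤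
        2 ^ m * (m.factorial * M * R ^ m) * δ := by
    refine norm_iteratedFDeriv_comp_clm_le hDuψ hDφψ x (fun i hi => ?_) fun i hi => ?_
    · refine norm_iteratedFDeriv_comp_le_of_forall_le (hDu.of_le (by norm_cast; omega))
        (hψ.of_le (by norm_cast; omega)) hR (fun k hk y => ?_)
        (fun k hk hkm => hψR k hk (by omega)) i hi x
      rw [norm_iteratedFDeriv_fderiv]
      exact huM (k + 1) (by omega) y
    · have hsub : (fun y => fderiv ℝ φ y - fderiv ℝ ψ y) = fderiv ℝ (fun y => φ y - ψ y) :=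
        funext fun y => (fderiv_fun_sub (hφd y) (hψd y)).symm
      rw [hsub, norm_iteratedFDeriv_fderiv]
      exact hδ (i + 1) (by omega) x
  rw [← norm_iteratedFDeriv_fderiv,
    fderiv_comp_sub_comp (hu.differentiable (by simp)) hφd hψd,
    fun_iteratedFDeriv_add_apply (hDuφψ.clm_comp hDφ).contDiffAt
      (hDuψ.clm_comp hDφψ).contDiffAt]
  exact (norm_add_le _ _).trans (add_le_add hfirst hsecond)

end Bounds

def compSubCompConst (R : ℝ) : ℕ → ℝ
  | 0 => 1
  | m + 1 => compSubCompConst R m + 2 ^ m * (compSubCompConst R m * R + m.factorial * R ^ m)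

theorem compSubCompConst_pos {R : ℝ} (hR : 0 ≤ R) : ∀ m, 0 < compSubCompConst R m
  | 0 => one_pos
  | m + 1 => by
    have := compSubCompConst_pos hR m
    rw [compSubCompConst]
    positivity

theorem compSubCompConst_le_succ {R : ℝ} (hR : 0 ≤ R) (m : ℕ) :
    compSubCompConst R m ≤ compSubCompConst R (m + 1) := by
  have := compSubCompConst_pos hR m
  rw [compSubCompConst]
  exact le_add_of_nonneg_right (by positivity)

universe u

theorem norm_iteratedFDeriv_comp_sub_comp_le {D : Type*} [NormedAddCommGroup D] [NormedSpace ℝ D]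
    {E F : Type u} [NormedAddCommGroup E] [NormedSpace ℝ E] [NormedAddCommGroup F]
    [NormedSpace ℝ F] {u : E → F} {φ ψ : D → E} {R M δ : ℝ} {m : ℕ} (hR : 1 ≤ R)
    (hu : ContDiff ℝ (m + 1 : ℕ) u) (huM : ∀ k ≤ m + 1, ∀ y, ‖iteratedFDeriv ℝ k u y‖ ≤ M)
    (hφ : ContDiff ℝ m φ) (hψ : ContDiff ℝ m ψ)
    (hφR : ∀ k, 1 ≤ k → k ≤ m → ∀ x, ‖iteratedFDeriv ℝ k φ x‖ ≤ R)
    (hψR : ∀ k, 1 ≤ k → k ≤ m → ∀ x, ‖iteratedFDeriv ℝ k ψ x‖ ≤ R)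
    (hδ : ∀ k ≤ m, ∀ x, ‖iteratedFDeriv ℝ k (fun y => φ y - ψ y) x‖ ≤ δ) :
    ∀ j ≤ m, ∀ x, ‖iteratedFDeriv ℝ j (fun y => u (φ y) - u (ψ y)) x‖ ≤
      compSubCompConst R m * M * δ := by
  have hM : 0 ≤ M := (norm_nonneg _).trans (huM 0 (by omega) 0)
  have hδ0 : 0 ≤ δ := (norm_nonneg _).trans (hδ 0 (by omega) 0)
  induction m generalizing F u with
  | zero =>
    intro j hj x
    obtain rfl : j = 0 := by omega
    have hDu : ∀ y, ‖fderiv ℝ u y‖ ≤ M := fun y => by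
      simpa [← norm_iteratedFDeriv_fderiv] using huM 1 le_rfl y
    calc ‖iteratedFDeriv ℝ 0 (fun y => u (φ y) - u (ψ y)) x‖ = ‖u (φ x) - u (ψ x)‖ :=
          norm_iteratedFDeriv_zero
      _ ≤ M * ‖φ x - ψ x‖ :=
          convex_univ.norm_image_sub_le_of_norm_fderiv_le
            (fun y _ => hu.differentiable (by simp) y) (fun y _ => hDu y) trivial trivial
      _ ≤ M * δ := by gcongr; simpa using hδ 0 le_rfl x
      _ = compSubCompConst R 0 * M * δ := by simp [compSubCompConst]
  | succ m ih =>
    have hC : 0 ≤ compSubCompConst R m * M * δ :=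
      mul_nonneg (mul_nonneg (compSubCompConst_pos (by linarith) m).le hM) hδ0
    have hφ' : ContDiff ℝ m φ := hφ.of_le (by norm_cast; omega)
    have hψ' : ContDiff ℝ m ψ := hψ.of_le (by norm_cast; omega)
    have hφR' : ∀ k, 1 ≤ k → k ≤ m → ∀ x, ‖iteratedFDeriv ℝ k φ x‖ ≤ R :=
      fun k hk hkm => hφR k hk (by omega)
    have hψR' : ∀ k, 1 ≤ k → k ≤ m → ∀ x, ‖iteratedFDeriv ℝ k ψ x‖ ≤ R :=
      fun k hk hkm => hψR k hk (by omega)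
    have hδ' : ∀ k ≤ m, ∀ x, ‖iteratedFDeriv ℝ k (fun y => φ y - ψ y) x‖ ≤ δ :=
      fun k hk => hδ k (by omega)
    intro j hj x
    rcases Nat.of_le_succ hj with hj | rfl
    · calc ‖iteratedFDeriv ℝ j (fun y => u (φ y) - u (ψ y)) x‖ ≤ compSubCompConst R m * M * δ :=
            ih (hu.of_le (by norm_cast; omega)) (fun k hk => huM k (by omega)) hφ' hψ' hφR' hψR'
              hδ' j hj x
        _ ≤ compSubCompConst R (m + 1) * M * δ := by
            gcongr
            exact compSubCompConst_le_succ (by linarith) m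
    have hDuM : ∀ k ≤ m + 1, ∀ y, ‖iteratedFDeriv ℝ k (fderiv ℝ u) y‖ ≤ M := fun k hk y => by
      rw [norm_iteratedFDeriv_fderiv]
      exact huM (k + 1) (by omega) y
    calc _ ≤ 2 ^ m * (compSubCompConst R m * M * δ) * R + 2 ^ m * (m.factorial * M * R ^ m) * δ :=
          norm_iteratedFDeriv_succ_comp_sub_comp_le hR hu huM hφ hψ hφR hψR hδ x
            (ih (hu.fderiv_right (by norm_cast)) hDuM hφ' hψ' hφR' hψR' hδ' · · x)
      _ ≤ compSubCompConst R (m + 1) * M * δ := by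
          rw [compSubCompConst]
          linear_combination hC

theorem bddAbove_range_of_tendsto_cocompact_zero {α : Type*} [TopologicalSpace α] {f : α → ℝ}
    (hf : Continuous f) (h : Tendsto f (cocompact α) (nhds 0)) : BddAbove (Set.range f) :=
  (⟨⟨f, hf⟩, h⟩ : ZeroAtInftyContinuousMap α ℝ).isBounded_range.bddAbove

section cSupNorm

variable {d : ℕ} {f : EuclideanSpace ℝ (Fin d) → EuclideanSpace ℝ (Fin d)}

theorem norm_iteratedFDeriv_le_cSupNorm {j k : ℕ} (hj : j ≤ k)
    (hf : BddAbove (Set.range fun x => ‖iteratedFDeriv ℝ j f x‖)) (x : EuclideanSpace ℝ (Fin d)) :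
    ‖iteratedFDeriv ℝ j f x‖ ≤ cSupNorm k f :=
  (le_ciSup hf x).trans <| single_le_sum (f := fun i => ⨆ x, ‖iteratedFDeriv ℝ i f x‖)
    (fun _ _ => Real.iSup_nonneg fun _ => norm_nonneg _) (mem_range.mpr (by omega))

theorem cSupNorm_le {k : ℕ} {B : ℝ} (h : ∀ j ≤ k, ∀ x, ‖iteratedFDeriv ℝ j f x‖ ≤ B) :
    cSupNorm k f ≤ (k + 1) * B :=
  (sum_le_sum fun j hj => ciSup_le (h j (Nat.lt_succ_iff.mp (mem_range.mp hj)))).trans_eq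
    (by simp)

end cSupNorm

/-- for `u ∈ C_0^{m+1}(ℝ^d,ℝ^d)` and `C^m` diffeomorphisms `φ, ψ`
with `‖φ − id‖_{m,∞} ≤ r`, `‖ψ − id‖_{m,∞} ≤ r`, one has
`‖u ∘ φ − u ∘ ψ‖_{m,∞} ≤ C_r ‖u‖_{m+1,∞} ‖φ − ψ‖_{m,∞}` with `C_r` depending
only on `r`, `m`, `d`. -/
theorem stmt14 (d m : ℕ) (r : ℝ) (hr : 0 < r) :
    ∃ C : ℝ, 0 < C ∧
      ∀ u φ ψ : EuclideanSpace ℝ (Fin d) → EuclideanSpace ℝ (Fin d),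
        ContDiff ℝ (m + 1) u →
        (∀ k ≤ m + 1, Filter.Tendsto (fun x => ‖iteratedFDeriv ℝ k u x‖)
          (Filter.cocompact (EuclideanSpace ℝ (Fin d))) (nhds 0)) →
        ContDiff ℝ m φ → Function.Bijective φ →
        ContDiff ℝ m ψ → Function.Bijective ψ →
        (∀ k ≤ m, ∀ x, ‖iteratedFDeriv ℝ k (fun y => φ y - y) x‖ ≤ r) →
        (∀ k ≤ m, ∀ x, ‖iteratedFDeriv ℝ k (fun y => ψ y - y) x‖ ≤ r) →
        cSupNorm m (fun x => u (φ x) - u (ψ x)) ≤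
          C * cSupNorm (m + 1) u * cSupNorm m (fun x => φ x - ψ x) := by
  have hR : 1 ≤ r + 1 := by linarith
  refine ⟨(m + 1) * compSubCompConst (r + 1) m,
    mul_pos (by positivity) (compSubCompConst_pos (by linarith) m), ?_⟩
  intro u φ ψ hu hdecay hφ _ hψ _ hφr hψr
  have huM : ∀ k ≤ m + 1, ∀ x, ‖iteratedFDeriv ℝ k u x‖ ≤ cSupNorm (m + 1) u := fun k hk =>
    norm_iteratedFDeriv_le_cSupNorm hk <| bddAbove_range_of_tendsto_cocompact_zero
      (hu.continuous_iteratedFDeriv (by exact_mod_cast hk)).norm (hdecay k hk)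
  have hδ : ∀ k ≤ m, ∀ x, ‖iteratedFDeriv ℝ k (fun y => φ y - ψ y) x‖ ≤
      cSupNorm m (fun x => φ x - ψ x) := fun k hk =>
    norm_iteratedFDeriv_le_cSupNorm hk ⟨2 * r, by
      rintro _ ⟨x, rfl⟩
      exact norm_iteratedFDeriv_sub_le_of_sub_id_le (hφ.of_le (by exact_mod_cast hk))
        (hψ.of_le (by exact_mod_cast hk)) (hφr k hk x) (hψr k hk x)⟩
  have key := norm_iteratedFDeriv_comp_sub_comp_le hR (by exact_mod_cast hu) huM hφ hψ
    (fun k hk hkm x => norm_iteratedFDeriv_le_of_sub_id_le (hφ.of_le (by exact_mod_cast hkm)) hk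
      (hφr k hkm x))
    (fun k hk hkm x => norm_iteratedFDeriv_le_of_sub_id_le (hψ.of_le (by exact_mod_cast hkm)) hk
      (hψr k hkm x)) hδ
  exact (cSupNorm_le key).trans_eq (by ring)
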